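/- Every strongly connected oriented graph D on n vertices with minimum in-degree at least 2 has an out-branching with at least (n/4)^{1/3} - 1 leaves. -/

import Mathlib

open Relation

/-- `T` is an out-branching (spanning out-tree) of the digraph `A` rooted at `r`. -/
def IsOutBranching {V : Type*} (A : V → V → Prop) (r : V) (T : V → V → Prop) : Prop :=
  (∀ u v, T u v → A u v) ∧
  (∀ u, ¬ T u r) ∧
  (∀ v, v ≠ r → ∃! u, T u v) ∧
  (∀ v, Relation.ReflTransGen T r v)

/-- Number of leaves (out-degree zero vertices) of a spanning tree relation `T`. -/
noncomputable def leavesCount {V : Type*} (T : V → V → Prop) : ℕ :=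
  {v : V | ∀ u, ¬ T v u}.ncard

/-- `T` is an out-tree of digraph `A` on vertex set `S`, rooted at `r`. -/
def IsOutTree {V : Type*} (A : V → V → Prop) (S : Set V) (r : V) (T : V → V → Prop) : Prop :=
  r ∈ S ∧
  (∀ u v, T u v → A u v ∧ u ∈ S ∧ v ∈ S) ∧
  (∀ u, ¬ T u r) ∧
  (∀ v ∈ S, v ≠ r → ∃! u, T u v) ∧
  (∀ v ∈ S, Relation.ReflTransGen T r v)

/-- Number of leaves of an out-tree with vertex set `S` and arc relation `T`. -/
noncomputable def treeLeaves {V : Type*} (S : Set V) (T : V → V → Prop) : ℕ :=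
  {v : V | v ∈ S ∧ ∀ u, ¬ T v u}.ncard

/-- A rooted (directed) tree on the whole vertex type. -/
def IsRootedTree {V : Type*} (T : V → V → Prop) (r : V) : Prop :=
  (∀ u, ¬ T u r) ∧
  (∀ v, v ≠ r → ∃! u, T u v) ∧
  (∀ v, Relation.ReflTransGen T r v)

/-- Out-degree of a vertex in a digraph/tree relation. -/
noncomputable def outDeg {V : Type*} (T : V → V → Prop) (v : V) : ℕ :=
  {u : V | T v u}.ncard

/-- The underlying undirected simple graph of a digraph. -/
def UN {V : Type*} (A : V → V → Prop) : SimpleGraph V where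
  Adj u v := u ≠ v ∧ (A u v ∨ A v u)
  symm := ⟨fun u v h => ⟨Ne.symm h.1, h.2.symm⟩⟩
  loopless := ⟨fun v h => h.1 rfl⟩

/-- The pathwidth of `G` is at most `w`: there is a path decomposition of width `≤ w`. -/
def pwLE {V : Type*} (G : SimpleGraph V) (w : ℕ) : Prop :=
  ∃ (s : ℕ) (X : Fin s → Finset V),
    (∀ v, ∃ i, v ∈ X i) ∧
    (∀ u v, G.Adj u v → ∃ i, u ∈ X i ∧ v ∈ X i) ∧
    (∀ i j k : Fin s, i ≤ j → j ≤ k → ∀ v, v ∈ X i → v ∈ X k → v ∈ X j) ∧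
    (∀ i, (X i).card ≤ w + 1)

/-- The strong component of the vertex `v` in digraph `A`. -/
def strongComp {V : Type*} (A : V → V → Prop) (v : V) : Set V :=
  {u : V | Relation.ReflTransGen A u v ∧ Relation.ReflTransGen A v u}

/-- Maximum number of leaves over all out-trees of `A` (ℓ(D)). -/
noncomputable def maxLeafOT {V : Type*} (A : V → V → Prop) : ℕ :=
  sSup {l : ℕ | ∃ (S : Set V) (r : V) (T : V → V → Prop), IsOutTree A S r T ∧ treeLeaves S T = l}

/-- Maximum number of leaves over all out-branchings of `A` (ℓ_s(D)), `0` if none exists. -/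
noncomputable def maxLeafOB {V : Type*} (A : V → V → Prop) : ℕ :=
  sSup {l : ℕ | ∃ (r : V) (T : V → V → Prop), IsOutBranching A r T ∧ leavesCount T = l}

/-- `T` is a 1-arc-exchange optimal out-branching of `A` rooted at `r`. -/
def OneAEOptimal {V : Type*} (A : V → V → Prop) (r : V) (T : V → V → Prop) : Prop :=
  IsOutBranching A r T ∧
  ∀ f x : V × V, T f.1 f.2 → A x.1 x.2 → ¬ T x.1 x.2 →
    IsOutBranching A r (fun a b => (T a b ∧ (a, b) ≠ f) ∨ (a, b) = x) →
    leavesCount (fun a b => (T a b ∧ (a, b) ≠ f) ∨ (a, b) = x) ≤ leavesCount T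

/-- Vertex separation of `G` is at most `k`, witnessed by some linear ordering. -/
def vsLE {V : Type*} [Fintype V] (G : SimpleGraph V) (k : ℕ) : Prop :=
  ∃ σ : Fin (Fintype.card V) ≃ V,
    ∀ j : Fin (Fintype.card V),
      {i : Fin (Fintype.card V) | i ≤ j ∧ ∃ i', j < i' ∧ G.Adj (σ i) (σ i')}.ncard ≤ k

/-
Let `T` be an out-branching with the maximum number `ℓ` of leaves. By strong connectivity every
out-tree grows into an out-branching, so no out-tree has more than `ℓ` leaves. Fewer than `ℓ`
vertices of `T` branch, and the others split into fewer than `2ℓ` paths of `T` of only children.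
Each vertex `v` has an in-neighbour `u` other than its parent. If `u` is not below `v`, moving `v`
under `u` frees the parent of `v`, so by maximality `u` is a leaf, and distinct such `v` give
distinct leaves. Otherwise `u` lies below `v`, at least two steps down the path since `D` is
oriented. Rerouting the path through such arcs produces out-trees, and bounding their leaves by `ℓ`
shows that the jumps `v ↦ u` along a path form a forest with at most `ℓ + 1` leaves per tree and
height at most `ℓ + 1`. Hence a path with `b` of the former vertices has length `O((b + 1) ℓ²)`, and
summing over the paths gives `n ≤ 4 (ℓ + 1)³`.
-/

open Finset

namespace IsRootedTree

variable {V : Type*} {T : V → V → Prop} {r : V}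

theorem ne_root (hT : IsRootedTree T r) {u v : V} (h : T u v) : v ≠ r := by
  rintro rfl
  exact hT.1 u h

theorem rel_unique (hT : IsRootedTree T r) {u u' v : V} (h : T u v) (h' : T u' v) : u = u' :=
  (hT.2.1 v (hT.ne_root h)).unique h h'

theorem induction (hT : IsRootedTree T r) {P : V → Prop} (root : P r)
    (step : ∀ u v, T u v → P u → P v) (v : V) : P v := by
  induction hT.2.2 v with
  | refl => exact root
  | tail _ h ih => exact step _ _ h ih

theorem not_transGen_self (hT : IsRootedTree T r) (v : V) : ¬ TransGen T v v := by
  refine hT.induction (P := fun v => ¬ TransGen T v v) ?_ ?_ v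
  · intro h
    obtain ⟨c, -, hc⟩ := TransGen.tail'_iff.mp h
    exact hT.1 c hc
  · intro u v huv ih h
    obtain ⟨x, hx, hxv⟩ := TransGen.tail'_iff.mp h
    obtain rfl := hT.rel_unique hxv huv
    exact ih (TransGen.head' huv hx)

theorem reflTransGen_antisymm (hT : IsRootedTree T r) {a b : V} (hab : ReflTransGen T a b)
    (hba : ReflTransGen T b a) : a = b := by
  rcases reflTransGen_iff_eq_or_transGen.mp hab with h | hab
  · exact h.symm
  rcases reflTransGen_iff_eq_or_transGen.mp hba with h | hba
  · exact h
  exact absurd (hab.trans hba) (hT.not_transGen_self a)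

end IsRootedTree

section Parent

variable {V : Type*} {T : V → V → Prop} {r : V}

open Classical in
/-- At the root, which has no parent, this is the junk value `v`. -/
noncomputable def parent (T : V → V → Prop) (v : V) : V :=
  if h : ∃ u, T u v then h.choose else v

theorem IsRootedTree.rel_parent (hT : IsRootedTree T r) {v : V} (hv : v ≠ r) :
    T (parent T v) v := by
  have h : ∃ u, T u v := (hT.2.1 v hv).exists
  rw [parent, dif_pos h]
  exact h.choose_spec

theorem IsRootedTree.parent_eq (hT : IsRootedTree T r) {u v : V} (h : T u v) :
    parent T v = u :=
  hT.rel_unique (hT.rel_parent (hT.ne_root h)) h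

end Parent

section Depth

variable {V : Type*} [Finite V] {T : V → V → Prop} {r : V}

noncomputable def depth (T : V → V → Prop) (v : V) : ℕ := {u | TransGen T u v}.ncard

theorem IsRootedTree.depth_eq_succ (hT : IsRootedTree T r) {u v : V} (h : T u v) :
    depth T v = depth T u + 1 := by
  have hset : {x | TransGen T x v} = insert u {x | TransGen T x u} := by
    ext x
    simp only [Set.mem_ofPred_eq, Set.mem_insert_iff]
    constructor
    · intro hx
      obtain ⟨y, hy, hyv⟩ := TransGen.tail'_iff.mp hx
      obtain rfl := hT.rel_unique hyv h
      exact (reflTransGen_iff_eq_or_transGen.mp hy).imp Eq.symm id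
    · rintro (rfl | hx)
      exacts [TransGen.single h, hx.tail h]
  rw [depth, depth, hset]
  exact Set.ncard_insert_of_notMem (hT.not_transGen_self u) (Set.toFinite _)

theorem IsRootedTree.depth_le_of_reflTransGen (hT : IsRootedTree T r) {a b : V}
    (h : ReflTransGen T a b) : depth T a ≤ depth T b := by
  induction h with
  | refl => exact le_rfl
  | tail _ hbc ih => rw [hT.depth_eq_succ hbc]; omega

end Depth

section OutDegree

variable {V : Type*} {T : V → V → Prop} {r : V}

theorem outDeg_eq_zero_iff [Finite V] {v : V} : outDeg T v = 0 ↔ ∀ u, ¬ T v u := by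
  rw [outDeg, Set.ncard_eq_zero (Set.toFinite _), Set.eq_empty_iff_forall_notMem]
  rfl

theorem eq_of_outDeg_le_one [Finite V] {v a b : V} (hv : outDeg T v ≤ 1) (ha : T v a)
    (hb : T v b) : a = b :=
  (Set.ncard_le_one (Set.toFinite _)).mp hv a ha b hb

variable [Fintype V]

open Classical in
theorem outDeg_eq_card (T : V → V → Prop) (v : V) :
    outDeg T v = (univ.filter (T v ·)).card := by
  rw [outDeg, ← Set.ncard_coe_finset]
  congr 1
  ext
  simp

theorem leavesCount_eq_card : leavesCount T = (univ.filter (outDeg T · = 0)).card := by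
  rw [leavesCount, ← Set.ncard_coe_finset]
  congr 1
  ext
  simp [outDeg_eq_zero_iff]

theorem IsRootedTree.sum_outDeg (hT : IsRootedTree T r) :
    ∑ v, outDeg T v + 1 = Fintype.card V := by
  classical
  have hunion : univ.biUnion (fun v => univ.filter (T v ·)) = univ.erase r := by
    ext u
    simp only [mem_biUnion, mem_filter, mem_univ, true_and, mem_erase, and_true]
    exact ⟨fun ⟨_, h⟩ => hT.ne_root h, fun hu => (hT.2.1 u hu).exists⟩
  have hdisj : (↑(univ : Finset V) : Set V).PairwiseDisjoint (fun v => univ.filter (T v ·)) := by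
    intro x _ y _ hxy
    simp only [Function.onFun, disjoint_left, mem_filter, mem_univ, true_and]
    exact fun u hx hy => hxy (hT.rel_unique hx hy)
  simp only [outDeg_eq_card]
  rw [← card_biUnion hdisj, hunion, card_erase_of_mem (mem_univ r), card_univ]
  have := Fintype.card_pos_iff.mpr ⟨r⟩
  omega

theorem IsRootedTree.sum_excess (hT : IsRootedTree T r) :
    ∑ v, ((outDeg T v : ℤ) - 1 + if outDeg T v = 0 then 1 else 0) = leavesCount T - 1 := by
  have h : ∑ v, (outDeg T v : ℤ) + 1 = Fintype.card V := by exact_mod_cast hT.sum_outDeg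
  rw [sum_add_distrib, sum_sub_distrib, sum_boole, leavesCount_eq_card]
  simp only [sum_const, card_univ, nsmul_eq_mul, mul_one]
  linarith

theorem IsRootedTree.card_branching_add_one_le (hT : IsRootedTree T r) :
    (univ.filter (2 ≤ outDeg T ·)).card + 1 ≤ leavesCount T := by
  have hle : ∑ v, (if 2 ≤ outDeg T v then (1 : ℤ) else 0) ≤
      ∑ v, ((outDeg T v : ℤ) - 1 + if outDeg T v = 0 then 1 else 0) :=
    sum_le_sum fun v _ => by split_ifs <;> omega
  rw [hT.sum_excess, sum_boole] at hle
  omega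

theorem IsRootedTree.sum_outDeg_branching_add_two_le (hT : IsRootedTree T r) :
    ∑ v ∈ univ.filter (2 ≤ outDeg T ·), outDeg T v + 2 ≤ 2 * leavesCount T := by
  have hle : ∑ v, (if 2 ≤ outDeg T v then (outDeg T v : ℤ) else 0) ≤
      ∑ v, 2 * ((outDeg T v : ℤ) - 1 + if outDeg T v = 0 then 1 else 0) :=
    sum_le_sum fun v _ => by split_ifs <;> omega
  rw [← mul_sum, hT.sum_excess, ← sum_filter] at hle
  have hl : 1 ≤ leavesCount T := by
    have := hT.card_branching_add_one_le
    omega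
  have hcast : ((∑ v ∈ univ.filter (2 ≤ outDeg T ·), outDeg T v : ℕ) : ℤ) ≤
      2 * ((leavesCount T : ℤ) - 1) := by
    push_cast
    exact hle
  omega

end OutDegree

section Chains

variable {V : Type*} {T : V → V → Prop} {r : V}

def IsOnlyChild (T : V → V → Prop) (r v : V) : Prop :=
  v ≠ r ∧ outDeg T (parent T v) ≤ 1

open Classical in
noncomputable def chainTopAux (T : V → V → Prop) (r : V) : ℕ → V → V
  | 0, v => v
  | m + 1, v => if IsOnlyChild T r v then chainTopAux T r m (parent T v) else v

/-- Climb from `v` while `IsOnlyChild` holds; the depth of `v` bounds the number of steps. -/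
noncomputable def chainTop (T : V → V → Prop) (r v : V) : V := chainTopAux T r (depth T v) v

noncomputable def chainIndex (T : V → V → Prop) (r v : V) : ℕ :=
  depth T v - depth T (chainTop T r v)

theorem chainTop_of_not_isOnlyChild {v : V} (h : ¬ IsOnlyChild T r v) :
    chainTop T r v = v := by
  rw [chainTop]
  cases depth T v with
  | zero => rfl
  | succ m => simp only [chainTopAux, if_neg h]

theorem isOnlyChild_of_chainIndex_ne_zero {v : V} (h : chainIndex T r v ≠ 0) :
    IsOnlyChild T r v := by
  by_contra hc
  rw [chainIndex, chainTop_of_not_isOnlyChild hc, Nat.sub_self] at h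
  exact h rfl

variable [Fintype V]

open Classical in
noncomputable def chainTops (T : V → V → Prop) (r : V) : Finset V :=
  univ.filter fun v => outDeg T v ≤ 1 ∧ ¬ IsOnlyChild T r v

open Classical in
noncomputable def chainFiber (T : V → V → Prop) (r t : V) : Finset V :=
  univ.filter fun v => outDeg T v ≤ 1 ∧ chainTop T r v = t

namespace IsRootedTree

variable (hT : IsRootedTree T r)
include hT

theorem chainTop_eq_parent {v : V} (h : IsOnlyChild T r v) :
    chainTop T r v = chainTop T r (parent T v) := by
  rw [chainTop, hT.depth_eq_succ (hT.rel_parent h.1), chainTopAux, if_pos h]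
  rfl

theorem reflTransGen_chainTop (v : V) : ReflTransGen T (chainTop T r v) v := by
  refine hT.induction (P := fun v => ReflTransGen T (chainTop T r v) v) ?_ ?_ v
  · rw [chainTop_of_not_isOnlyChild fun h => h.1 rfl]
  · intro u v huv ih
    by_cases h : IsOnlyChild T r v
    · rw [hT.chainTop_eq_parent h, hT.parent_eq huv]
      exact ih.tail huv
    · rw [chainTop_of_not_isOnlyChild h]

theorem chainIndex_eq_succ {v : V} (h : IsOnlyChild T r v) :
    chainIndex T r v = chainIndex T r (parent T v) + 1 := by
  have hdepth := hT.depth_eq_succ (hT.rel_parent h.1)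
  have htop := hT.depth_le_of_reflTransGen (hT.reflTransGen_chainTop (parent T v))
  rw [chainIndex, chainIndex, hT.chainTop_eq_parent h]
  omega

theorem eq_of_chainTop_eq_of_chainIndex_eq {n : ℕ} : ∀ {v w : V}, chainIndex T r v = n →
    chainIndex T r w = n → chainTop T r v = chainTop T r w → v = w := by
  induction n with
  | zero =>
    intro v w hv hw htop
    have top_eq : ∀ x : V, chainIndex T r x = 0 → chainTop T r x = x := fun x hx => by
      refine chainTop_of_not_isOnlyChild fun h => ?_
      rw [hT.chainIndex_eq_succ h] at hx
      omega
    rwa [top_eq v hv, top_eq w hw] at htop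
  | succ n ih =>
    intro v w hv hw htop
    have hcv := isOnlyChild_of_chainIndex_ne_zero (by omega : chainIndex T r v ≠ 0)
    have hcw := isOnlyChild_of_chainIndex_ne_zero (by omega : chainIndex T r w ≠ 0)
    have hpar : parent T v = parent T w := by
      refine ih ?_ ?_ ?_
      · have := hT.chainIndex_eq_succ hcv; omega
      · have := hT.chainIndex_eq_succ hcw; omega
      · rwa [← hT.chainTop_eq_parent hcv, ← hT.chainTop_eq_parent hcw]
    exact eq_of_outDeg_le_one hcv.2 (hT.rel_parent hcv.1) (hpar ▸ hT.rel_parent hcw.1)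

theorem chainTop_mem_chainTops {v : V} (hv : outDeg T v ≤ 1) :
    chainTop T r v ∈ chainTops T r := by
  refine hT.induction (P := fun v => outDeg T v ≤ 1 → chainTop T r v ∈ chainTops T r)
    ?_ ?_ v hv
  · intro hr
    have h : ¬ IsOnlyChild T r r := fun h => h.1 rfl
    simpa [chainTop_of_not_isOnlyChild h, chainTops] using ⟨hr, h⟩
  · intro u v huv ih hv
    by_cases h : IsOnlyChild T r v
    · have hc := h.2
      rw [hT.chainTop_eq_parent h, hT.parent_eq huv] at *
      exact ih hc
    · simpa [chainTop_of_not_isOnlyChild h, chainTops] using ⟨hv, h⟩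

theorem card_chainTops_add_one_le : (chainTops T r).card + 1 ≤ 2 * leavesCount T := by
  classical
  have hsub : (chainTops T r).erase r ⊆
      (univ.filter (2 ≤ outDeg T ·)).biUnion fun v => univ.filter (T v ·) := by
    intro v hv
    simp only [mem_erase, chainTops, mem_filter, mem_univ, true_and] at hv
    obtain ⟨hvr, -, hnc⟩ := hv
    simp only [mem_biUnion, mem_filter, mem_univ, true_and]
    exact ⟨parent T v, by by_contra h; exact hnc ⟨hvr, by omega⟩, hT.rel_parent hvr⟩
  have hcard := (card_le_card hsub).trans card_biUnion_le
  simp only [← outDeg_eq_card] at hcard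
  have := hT.sum_outDeg_branching_add_two_le
  have := pred_card_le_card_erase (s := chainTops T r) (a := r)
  omega

open Classical in
theorem sum_card_filter_chainFiber (P : V → Prop) :
    ∑ t ∈ chainTops T r, ((chainFiber T r t).filter P).card =
      (univ.filter fun v => outDeg T v ≤ 1 ∧ P v).card := by
  have hcover : univ.filter (fun v => outDeg T v ≤ 1 ∧ P v) =
      (chainTops T r).biUnion fun t => (chainFiber T r t).filter P := by
    ext v
    simp only [mem_filter, mem_univ, true_and, mem_biUnion, chainFiber]
    exact ⟨fun hv => ⟨_, hT.chainTop_mem_chainTops hv.1, ⟨hv.1, rfl⟩, hv.2⟩,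
      fun ⟨_, _, ⟨hv, _⟩, hP⟩ => ⟨hv, hP⟩⟩
  rw [hcover, card_biUnion]
  intro x _ y _ hxy
  simp only [Function.onFun, disjoint_left, chainFiber, mem_filter, mem_univ, true_and]
  exact fun v hx hy => hxy (hx.1.2 ▸ hy.1.2)

open Classical in
theorem exists_path_chainFiber {t : V} (ht : t ∈ chainTops T r) :
    ∃ (K : ℕ) (p : ℕ → V), (∀ j < K, T (p j) (p (j + 1))) ∧
      chainFiber T r t = (range (K + 1)).image p := by
  simp only [chainTops, mem_filter, mem_univ, true_and] at ht
  have htop : t ∈ chainFiber T r t := by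
    simpa [chainFiber, chainTop_of_not_isOnlyChild ht.2] using ht.1
  obtain ⟨v, hv, hvmax⟩ := exists_max_image (chainFiber T r t) (chainIndex T r) ⟨t, htop⟩
  set K := chainIndex T r v
  have hanc : ∀ i ≤ K, (parent T)^[i] v ∈ chainFiber T r t ∧
      chainIndex T r ((parent T)^[i] v) = K - i := by
    intro i
    induction i with
    | zero => exact fun _ => ⟨hv, rfl⟩
    | succ i ih =>
      intro hi
      obtain ⟨hmem, hidx⟩ := ih (by omega)
      have hc := isOnlyChild_of_chainIndex_ne_zero
        (by omega : chainIndex T r ((parent T)^[i] v) ≠ 0)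
      simp only [chainFiber, mem_filter, mem_univ, true_and] at hmem ⊢
      rw [Function.iterate_succ_apply', ← hT.chainTop_eq_parent hc]
      exact ⟨⟨hc.2, hmem.2⟩, by have := hT.chainIndex_eq_succ hc; omega⟩
  refine ⟨K, fun j => (parent T)^[K - j] v, fun j hj => ?_, ?_⟩
  · have hc := isOnlyChild_of_chainIndex_ne_zero
      (by have := (hanc (K - (j + 1)) (by omega)).2; omega :
        chainIndex T r ((parent T)^[K - (j + 1)] v) ≠ 0)
    have hKj : K - j = K - (j + 1) + 1 := by omega
    simp only [hKj, Function.iterate_succ_apply']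
    exact hT.rel_parent hc.1
  · ext w
    simp only [mem_image, mem_range]
    constructor
    · intro hw
      have hwK := hvmax w hw
      obtain ⟨hmem, hidx⟩ := hanc (K - chainIndex T r w) (by omega)
      simp only [chainFiber, mem_filter, mem_univ, true_and] at hw hmem
      refine ⟨chainIndex T r w, by omega, hT.eq_of_chainTop_eq_of_chainIndex_eq hidx ?_ ?_⟩
      · omega
      · rw [hmem.2, hw.2]
    · rintro ⟨j, hj, rfl⟩
      exact (hanc (K - j) (by omega)).1

end IsRootedTree

end Chains

section Extension

variable {V : Type*} {A : V → V → Prop}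

theorem IsOutBranching.isRootedTree {r : V} {T : V → V → Prop} (hB : IsOutBranching A r T) :
    IsRootedTree T r :=
  hB.2

theorem IsOutBranching.isOutTree {r : V} {T : V → V → Prop} (hB : IsOutBranching A r T) :
    IsOutTree A Set.univ r T :=
  ⟨trivial, fun u v h => ⟨hB.1 u v h, trivial, trivial⟩, hB.2.1, fun v _ => hB.2.2.1 v,
    fun v _ => hB.2.2.2 v⟩

theorem treeLeaves_univ (T : V → V → Prop) : treeLeaves Set.univ T = leavesCount T := by
  simp [treeLeaves, leavesCount]

theorem exists_arc_out_of_reflTransGen {S : Set V} {x y : V} (h : ReflTransGen A x y)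
    (hx : x ∈ S) (hy : y ∉ S) : ∃ a ∈ S, ∃ b ∉ S, A a b := by
  induction h with
  | refl => exact absurd hx hy
  | @tail b c _ hbc ih =>
    by_cases hb : b ∈ S
    · exact ⟨b, hb, c, hy, hbc⟩
    · exact ih hb

variable [Finite V]

theorem IsOutTree.add_arc {S : Set V} {ρ : V} {T : V → V → Prop} (hOT : IsOutTree A S ρ T)
    {x y : V} (hx : x ∈ S) (hy : y ∉ S) (hxy : A x y) :
    IsOutTree A (insert y S) ρ (fun a b => T a b ∨ (a = x ∧ b = y)) ∧
      treeLeaves S T ≤ treeLeaves (insert y S) (fun a b => T a b ∨ (a = x ∧ b = y)) := by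
  obtain ⟨hρ, harc, hroot, huniq, hreach⟩ := hOT
  have hmono : ∀ v ∈ S, ReflTransGen (fun a b => T a b ∨ (a = x ∧ b = y)) ρ v :=
    fun v hv => ReflTransGen.mono (fun _ _ h => Or.inl h) _ _ (hreach v hv)
  refine ⟨⟨Set.mem_insert_of_mem _ hρ, ?_, ?_, ?_, ?_⟩, ?_⟩
  · rintro a b (h | ⟨rfl, rfl⟩)
    · obtain ⟨hab, ha, hb⟩ := harc a b h
      exact ⟨hab, Set.mem_insert_of_mem _ ha, Set.mem_insert_of_mem _ hb⟩
    · exact ⟨hxy, Set.mem_insert_of_mem _ hx, Set.mem_insert _ _⟩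
  · rintro u (h | ⟨-, rfl⟩)
    exacts [hroot u h, hy hρ]
  · rintro v (rfl | hv) hvρ
    · refine ⟨x, Or.inr ⟨rfl, rfl⟩, ?_⟩
      rintro u (h | ⟨rfl, -⟩)
      exacts [absurd (harc u v h).2.2 hy, rfl]
    · obtain ⟨u, hu, hun⟩ := huniq v hv hvρ
      refine ⟨u, Or.inl hu, ?_⟩
      rintro u' (h | ⟨-, rfl⟩)
      exacts [hun u' h, absurd hv hy]
  · rintro v (rfl | hv)
    exacts [(hmono x hx).tail (Or.inr ⟨rfl, rfl⟩), hmono v hv]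
  · have hsub : insert y ({v | v ∈ S ∧ ∀ u, ¬ T v u} \ {x}) ⊆
        {v | v ∈ insert y S ∧ ∀ u, ¬ (T v u ∨ (v = x ∧ u = y))} := by
      rintro v (rfl | ⟨⟨hv, hleaf⟩, hvx⟩)
      · refine ⟨Set.mem_insert _ _, ?_⟩
        rintro u (h | ⟨rfl, -⟩)
        exacts [hy (harc _ _ h).2.1, hy hx]
      · refine ⟨Set.mem_insert_of_mem _ hv, ?_⟩
        rintro u (h | ⟨rfl, -⟩)
        exacts [hleaf u h, hvx rfl]
    have hcard := Set.ncard_le_ncard hsub (Set.toFinite _)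
    rw [Set.ncard_insert_of_notMem (fun h => hy h.1.1) (Set.toFinite _)] at hcard
    have := Set.pred_ncard_le_ncard_sdiff_singleton {v | v ∈ S ∧ ∀ u, ¬ T v u} x
    rw [treeLeaves, treeLeaves]
    omega

theorem IsOutTree.exists_outBranching (hsc : ∀ u v : V, ReflTransGen A u v) {S : Set V} {ρ : V}
    {T : V → V → Prop} (hOT : IsOutTree A S ρ T) :
    ∃ T' : V → V → Prop, IsOutBranching A ρ T' ∧ treeLeaves S T ≤ leavesCount T' := by
  induction h : Sᶜ.ncard generalizing S T with
  | zero =>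
    obtain rfl : S = Set.univ := by
      simpa [Set.compl_empty_iff] using (Set.ncard_eq_zero (Set.toFinite _)).mp h
    obtain ⟨-, harc, hroot, huniq, hreach⟩ := hOT
    exact ⟨T, ⟨fun u v h => (harc u v h).1, hroot, fun v => huniq v trivial,
      fun v => hreach v trivial⟩, (treeLeaves_univ T).le⟩
  | succ n ih =>
    obtain ⟨y, hy⟩ : ∃ y, y ∉ S := by
      by_contra! hS
      simp [Set.eq_univ_of_forall hS] at h
    obtain ⟨a, ha, b, hb, hab⟩ := exists_arc_out_of_reflTransGen (hsc ρ y) hOT.1 hy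
    obtain ⟨hOT', hleaves⟩ := hOT.add_arc ha hb hab
    have hcard : (insert b S)ᶜ.ncard = n := by
      have hset : (insert b S)ᶜ = Sᶜ \ {b} := by
        ext
        simp [and_comm]
      rw [hset, Set.ncard_sdiff_singleton_of_mem (show b ∈ Sᶜ from hb), h]
      rfl
    obtain ⟨T', hB, hle⟩ := ih hOT' hcard
    exact ⟨T', hB, hleaves.trans hle⟩

theorem exists_outBranching_forall_treeLeaves_le [Nonempty V]
    (hsc : ∀ u v : V, ReflTransGen A u v) :
    ∃ (r : V) (T : V → V → Prop), IsOutBranching A r T ∧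
      ∀ (S : Set V) (ρ : V) (T' : V → V → Prop), IsOutTree A S ρ T' →
        treeLeaves S T' ≤ leavesCount T := by
  obtain ⟨v⟩ := ‹Nonempty V›
  have hsingle : IsOutTree A {v} v fun _ _ => False :=
    ⟨rfl, fun _ _ h => h.elim, fun _ h => h, fun _ hw hwv => absurd hw hwv,
      fun _ hw => hw ▸ ReflTransGen.refl⟩
  obtain ⟨T₀, hB₀, -⟩ := hsingle.exists_outBranching hsc
  obtain ⟨⟨r, T⟩, hB, hmax⟩ := Set.exists_max_image
    {x : V × (V → V → Prop) | IsOutBranching A x.1 x.2} (fun x => leavesCount x.2)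
    (Set.toFinite _) ⟨(v, T₀), hB₀⟩
  refine ⟨r, T, hB, fun S ρ T' hOT => ?_⟩
  obtain ⟨T'', hB'', hle⟩ := hOT.exists_outBranching hsc
  exact hle.trans (hmax (ρ, T'') hB'')

end Extension

section Exchange

variable {V : Type*} {A T : V → V → Prop} {r : V}

theorem IsOutBranching.reattach (hB : IsOutBranching A r T) {W : Set V} (hWr : r ∉ W) {u : V}
    (huA : ∀ w ∈ W, A u w) (hu : ∀ w ∈ W, ¬ ReflTransGen T w u) :
    IsOutBranching A r fun a b => (T a b ∧ b ∉ W) ∨ (b ∈ W ∧ a = u) := by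
  have hT := hB.isRootedTree
  set T' : V → V → Prop := fun a b => (T a b ∧ b ∉ W) ∨ (b ∈ W ∧ a = u)
  have hreach_of_not_below : ∀ v, (∀ w ∈ W, ¬ ReflTransGen T w v) → ReflTransGen T' r v := by
    refine hT.induction (fun _ => ReflTransGen.refl) fun a b hab ih hb => ?_
    exact (ih fun w hw h => hb w hw (h.tail hab)).tail
      (Or.inl ⟨hab, fun hbW => hb b hbW ReflTransGen.refl⟩)
  refine ⟨?_, ?_, fun v hv => ?_, hT.induction ReflTransGen.refl fun a b hab ih => ?_⟩
  · rintro a b (⟨h, -⟩ | ⟨hb, rfl⟩)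
    exacts [hB.1 a b h, huA b hb]
  · rintro a (⟨h, -⟩ | ⟨h, -⟩)
    exacts [hT.1 a h, hWr h]
  · by_cases hvW : v ∈ W
    · refine ⟨u, Or.inr ⟨hvW, rfl⟩, ?_⟩
      rintro y (⟨-, h⟩ | ⟨-, rfl⟩)
      exacts [absurd hvW h, rfl]
    · refine ⟨parent T v, Or.inl ⟨hT.rel_parent hv, hvW⟩, ?_⟩
      rintro y (⟨hy, -⟩ | ⟨h, -⟩)
      exacts [(hT.parent_eq hy).symm, absurd h hvW]
  · by_cases hbW : b ∈ W
    · exact (hreach_of_not_below u hu).tail (Or.inr ⟨hbW, rfl⟩)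
    · exact ih.tail (Or.inl ⟨hab, hbW⟩)

variable [Finite V]

/-- Reattaching only children makes their parents leaves, while only `u` can stop being one; so
in a tree with the maximum number of leaves this gain is at most the loss. -/
theorem IsOutBranching.ncard_add_ncard_leaves_le_of_reattach (hB : IsOutBranching A r T)
    (hmax : ∀ T', IsOutBranching A r T' → leavesCount T' ≤ leavesCount T) {W : Set V}
    (hW : ∀ w ∈ W, IsOnlyChild T r w) {u : V} (huA : ∀ w ∈ W, A u w)
    (hu : ∀ w ∈ W, ¬ ReflTransGen T w u) (hpar : ∀ w ∈ W, parent T w ≠ u) :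
    W.ncard + ({z | ∀ y, ¬ T z y} \ {u}).ncard ≤ leavesCount T := by
  have hT := hB.isRootedTree
  have hB' := hB.reattach (fun hr => (hW r hr).1 rfl) huA hu
  have hsub : parent T '' W ∪ ({z | ∀ y, ¬ T z y} \ {u}) ⊆
      {z | ∀ y, ¬ ((T z y ∧ y ∉ W) ∨ (y ∈ W ∧ z = u))} := by
    rintro z ((⟨w, hw, rfl⟩ | ⟨hz, hzu⟩))
    · rintro y (⟨hy, hyW⟩ | ⟨-, h⟩)
      · exact hyW (eq_of_outDeg_le_one (hW w hw).2 hy (hT.rel_parent (hW w hw).1) ▸ hw)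
      · exact hpar w hw h
    · rintro y (⟨hy, -⟩ | ⟨-, h⟩)
      exacts [hz y hy, hzu h]
  have hinj : Set.InjOn (parent T) W := fun w₁ h₁ w₂ h₂ h =>
    eq_of_outDeg_le_one (hW w₁ h₁).2 (hT.rel_parent (hW w₁ h₁).1)
      (h ▸ hT.rel_parent (hW w₂ h₂).1)
  have hdisj : Disjoint (parent T '' W) ({z | ∀ y, ¬ T z y} \ {u}) := by
    rw [Set.disjoint_left]
    rintro _ ⟨w, hw, rfl⟩ ⟨hleaf, -⟩
    exact hleaf w (hT.rel_parent (hW w hw).1)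
  have hcard := Set.ncard_le_ncard hsub (Set.toFinite _)
  rw [Set.ncard_union_eq hdisj, hinj.ncard_image] at hcard
  exact hcard.trans (hmax _ hB')

end Exchange

section BadVertices

variable {V : Type*} {A T : V → V → Prop} {r : V}

open Classical in
/-- The junk value is `v` if `v` has no in-neighbour besides its parent. -/
noncomputable def otherInNbr (A T : V → V → Prop) (v : V) : V :=
  if h : ∃ w, A w v ∧ w ≠ parent T v then h.choose else v

theorem otherInNbr_spec [Finite V] {v : V} (hv : 2 ≤ {u | A u v}.ncard) :
    A (otherInNbr A T v) v ∧ otherInNbr A T v ≠ parent T v := by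
  have h : ∃ w, A w v ∧ w ≠ parent T v :=
    Set.exists_ne_of_one_lt_ncard (s := {u | A u v}) (by omega) (parent T v)
  rw [otherInNbr, dif_pos h]
  exact h.choose_spec

def badVertices (A T : V → V → Prop) (r : V) : Set V :=
  {v | IsOnlyChild T r v ∧ ¬ ReflTransGen T v (otherInNbr A T v)}

/-- In an out-branching with the maximum number of leaves, `otherInNbr` maps the bad vertices
injectively to leaves. -/
theorem IsOutBranching.ncard_badVertices_le [Finite V] (hB : IsOutBranching A r T)
    (hmax : ∀ T', IsOutBranching A r T' → leavesCount T' ≤ leavesCount T)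
    (hindeg : ∀ v, 2 ≤ {u | A u v}.ncard) :
    (badVertices A T r).ncard ≤ leavesCount T := by
  have hspec := fun v => otherInNbr_spec (T := T) (hindeg v)
  have hleaf : ∀ v ∈ badVertices A T r, ∀ y, ¬ T (otherInNbr A T v) y := by
    rintro v ⟨hv, hbelow⟩ y hy
    have := hB.ncard_add_ncard_leaves_le_of_reattach hmax (W := {v}) (by simpa using hv)
      (by simpa using (hspec v).1) (by simpa using hbelow) (by simpa using (hspec v).2.symm)
    rw [Set.ncard_singleton, Set.sdiff_singleton_eq_self
      (show otherInNbr A T v ∉ {z | ∀ y, ¬ T z y} from fun h => h y hy)] at this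
    exact absurd this (by rw [leavesCount]; omega)
  have hinj : Set.InjOn (otherInNbr A T) (badVertices A T r) := by
    intro v₁ h₁ v₂ h₂ h
    by_contra hne
    have := hB.ncard_add_ncard_leaves_le_of_reattach hmax (W := {v₁, v₂})
      (by rintro w (rfl | rfl); exacts [h₁.1, h₂.1])
      (by rintro w (rfl | rfl); exacts [(hspec _).1, h ▸ (hspec _).1])
      (by rintro w (rfl | rfl); exacts [h₁.2, h ▸ h₂.2])
      (by rintro w (rfl | rfl); exacts [(hspec _).2.symm, h ▸ (hspec _).2.symm])
    rw [Set.ncard_pair hne, Set.ncard_sdiff_singleton_of_mem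
      (show otherInNbr A T v₁ ∈ {z | ∀ y, ¬ T z y} from hleaf v₁ h₁)] at this
    have : 0 < leavesCount T := (Set.ncard_pos (Set.toFinite _)).mpr ⟨_, hleaf v₁ h₁⟩
    rw [leavesCount] at *
    omega
  calc (badVertices A T r).ncard
      = (otherInNbr A T '' badVertices A T r).ncard := (hinj.ncard_image).symm
    _ ≤ leavesCount T := Set.ncard_le_ncard (by rintro _ ⟨v, hv, rfl⟩; exact hleaf v hv)
        (Set.toFinite _)

end BadVertices

section Reroute

variable {V : Type*} {A T : V → V → Prop} {r : V}

/-- Inside the subtree of `h₀`, every `h ∈ H` other than `ρ` is moved below `g h`. -/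
def reroute (T : V → V → Prop) (H : Set V) (h₀ ρ : V) (g : V → V) : V → V → Prop :=
  fun a b => ReflTransGen T h₀ a ∧ ReflTransGen T h₀ b ∧
    ((T a b ∧ b ∉ H) ∨ (b ∈ H ∧ b ≠ ρ ∧ a = g b))

variable {H : Set V} {h₀ ρ : V} {g : V → V}

theorem IsRootedTree.reflTransGen_reroute_of_forall_mem (hT : IsRootedTree T r) {h x : V}
    (hh₀ : ReflTransGen T h₀ h) (hhx : ReflTransGen T h x)
    (hH : ∀ y ∈ H, ReflTransGen T h y → ReflTransGen T y x → y = h) :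
    ReflTransGen (reroute T H h₀ ρ g) h x := by
  induction hhx with
  | refl => exact ReflTransGen.refl
  | @tail b c hb hbc ih =>
    refine (ih fun y hy h1 h2 => hH y hy h1 (h2.tail hbc)).tail
      ⟨hh₀.trans hb, (hh₀.trans hb).tail hbc, Or.inl ⟨hbc, fun hc => ?_⟩⟩
    obtain rfl := hH c hc (hb.tail hbc) ReflTransGen.refl
    exact hT.not_transGen_self _ (TransGen.tail' hb hbc)

variable [Finite V]

theorem IsRootedTree.reflTransGen_reroute (hT : IsRootedTree T r)
    (hH : ∀ h ∈ H, ReflTransGen T h₀ h)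
    (hg : ∀ h ∈ H, h ≠ ρ → ∃ h' ∈ H, h' ≠ h ∧ ReflTransGen T h h' ∧ ReflTransGen T h' (g h))
    {h : V} (hh : h ∈ H) {x : V} (hx : ReflTransGen T h x) :
    ReflTransGen (reroute T H h₀ ρ g) ρ x := by
  -- Induction on the number of vertices of `H` below `h`: the new parent of `h` hangs below a
  -- deeper one.
  induction hn : {h' ∈ H | ReflTransGen T h h'}.ncard using Nat.strong_induction_on
    generalizing h x with
  | _ n ih =>
    have ih' : ∀ h' ∈ H, h' ≠ h → ReflTransGen T h h' → ∀ x, ReflTransGen T h' x →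
        ReflTransGen (reroute T H h₀ ρ g) ρ x := fun h' hh' hne hhh' x hx =>
      ih _ (hn ▸ Set.ncard_lt_ncard ⟨fun y ⟨hy, h'y⟩ => ⟨hy, hhh'.trans h'y⟩,
        fun hsub => hne (hT.reflTransGen_antisymm hhh' (hsub ⟨hh, .refl⟩).2).symm⟩) hh' hx rfl
    by_cases hdeeper : ∃ h' ∈ H, h' ≠ h ∧ ReflTransGen T h h' ∧ ReflTransGen T h' x
    · obtain ⟨h', hh', hne, hhh', hh'x⟩ := hdeeper
      exact ih' h' hh' hne hhh' x hh'x
    push Not at hdeeper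
    refine ReflTransGen.trans ?_ (hT.reflTransGen_reroute_of_forall_mem (hH h hh) hx
      fun y hy h1 h2 => by_contra fun hne => hdeeper y hy hne h1 h2)
    by_cases hhρ : h = ρ
    · rw [hhρ]
    obtain ⟨h', hh', hne, hhh', hh'g⟩ := hg h hh hhρ
    exact (ih' h' hh' hne hhh' _ hh'g).tail
      ⟨((hH h hh).trans hhh').trans hh'g, hH h hh, Or.inr ⟨hh, hhρ, rfl⟩⟩

theorem IsOutBranching.isOutTree_reroute (hB : IsOutBranching A r T) (hh₀ : h₀ ∈ H)
    (hρ : ρ ∈ H) (hH : ∀ h ∈ H, ReflTransGen T h₀ h) (hgA : ∀ h ∈ H, h ≠ ρ → A (g h) h)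
    (hg : ∀ h ∈ H, h ≠ ρ → ∃ h' ∈ H, h' ≠ h ∧ ReflTransGen T h h' ∧ ReflTransGen T h' (g h)) :
    IsOutTree A {v | ReflTransGen T h₀ v} ρ (reroute T H h₀ ρ g) := by
  have hT := hB.isRootedTree
  refine ⟨hH ρ hρ, ?_, ?_, fun v hv hvρ => ?_,
    fun v hv => hT.reflTransGen_reroute hH hg hh₀ hv⟩
  · rintro a b ⟨ha, hb, ⟨hab, -⟩ | ⟨hbH, hbρ, rfl⟩⟩
    exacts [⟨hB.1 a b hab, ha, hb⟩, ⟨hgA b hbH hbρ, ha, hb⟩]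
  · rintro a ⟨-, -, ⟨-, h⟩ | ⟨-, h, -⟩⟩
    exacts [h hρ, h rfl]
  · by_cases hvH : v ∈ H
    · obtain ⟨h', hh', -, hvh', hh'g⟩ := hg v hvH hvρ
      refine ⟨g v, ⟨(hv.trans hvh').trans hh'g, hv, Or.inr ⟨hvH, hvρ, rfl⟩⟩, ?_⟩
      rintro a ⟨-, -, ⟨-, h⟩ | ⟨-, -, rfl⟩⟩
      exacts [absurd hvH h, rfl]
    · rcases hv.cases_tail with rfl | ⟨c, hc, hcv⟩
      · exact absurd hh₀ hvH
      refine ⟨c, ⟨hc, hv, Or.inl ⟨hcv, hvH⟩⟩, ?_⟩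
      rintro a ⟨-, -, ⟨hav, -⟩ | ⟨h, -⟩⟩
      exacts [hT.rel_unique hav hcv, absurd h hvH]

theorem le_treeLeaves_reroute :
    {c | ReflTransGen T h₀ c ∧ (∀ y, T c y → y ∈ H) ∧ ∀ h ∈ H, h ≠ ρ → g h ≠ c}.ncard ≤
      treeLeaves {v | ReflTransGen T h₀ v} (reroute T H h₀ ρ g) := by
  refine Set.ncard_le_ncard ?_ (Set.toFinite _)
  rintro c ⟨hc, hchild, hg⟩
  refine ⟨hc, ?_⟩
  rintro y ⟨-, -, ⟨hcy, hy⟩ | ⟨hy, hyρ, rfl⟩⟩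
  exacts [hy (hchild y hcy), hg y hy hyρ rfl]

end Reroute

section Forest

variable {G : Finset ℕ} {d : ℕ → ℕ}

/-- The positions `G` with the parent map `d` form a forest whose roots are `G.image d \ G`. -/
def ForestReach (G : Finset ℕ) (d : ℕ → ℕ) : ℕ → ℕ → Prop :=
  ReflTransGen fun a b => a ∈ G ∧ d a = b

/-- For a gap `a`, the vertex `p (a - 1)` becomes a leaf when a path `p` is rerouted along `S`
(see `card_forestGaps_le`). -/
def forestGaps (d : ℕ → ℕ) (S : Finset ℕ) (hS : S.Nonempty) : Finset ℕ :=
  S.erase (S.min' hS) \ (S.erase (S.max' hS)).image (d · + 1)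

open Classical in
noncomputable def forestOrbit (G : Finset ℕ) (d : ℕ → ℕ) (i : ℕ) : Finset ℕ :=
  (G ∪ G.image d).filter (ForestReach G d i)

open Classical in
noncomputable def forestTree (G : Finset ℕ) (d : ℕ → ℕ) (ρ : ℕ) : Finset ℕ :=
  (G ∪ G.image d).filter (ForestReach G d · ρ)

theorem mem_forestOrbit {i a : ℕ} :
    a ∈ forestOrbit G d i ↔ a ∈ G ∪ G.image d ∧ ForestReach G d i a := by
  simp [forestOrbit]

theorem mem_forestTree {ρ a : ℕ} :
    a ∈ forestTree G d ρ ↔ a ∈ G ∪ G.image d ∧ ForestReach G d a ρ := by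
  simp [forestTree]

theorem ForestReach.le (hlt : ∀ i ∈ G, i < d i) {a b : ℕ} (h : ForestReach G d a b) : a ≤ b := by
  induction h with
  | refl => exact le_rfl
  | tail _ hbc ih => exact ih.trans (hbc.2 ▸ (hlt _ hbc.1).le)

theorem ForestReach.eq_of_notMem {a b : ℕ} (h : ForestReach G d a b) (ha : a ∉ G) : a = b := by
  rcases h.cases_head with h | ⟨c, hac, -⟩
  exacts [h, absurd hac.1 ha]

theorem ForestReach.total {i a b : ℕ} (ha : ForestReach G d i a) (hb : ForestReach G d i b) :
    ForestReach G d a b ∨ ForestReach G d b a :=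
  ReflTransGen.total_of_right_unique (fun _ _ _ h h' => h.2.symm.trans h'.2) ha hb

theorem d_mem_forestOrbit {i a : ℕ} (ha : a ∈ forestOrbit G d i) (haG : a ∈ G) :
    d a ∈ forestOrbit G d i := by
  simp only [forestOrbit, mem_filter] at ha ⊢
  exact ⟨mem_union_right _ (mem_image_of_mem d haG), ha.2.tail ⟨haG, rfl⟩⟩

theorem forestOrbit_nonempty {i : ℕ} (hi : i ∈ G) : (forestOrbit G d i).Nonempty :=
  ⟨i, by simpa [forestOrbit] using ⟨.inl hi, .refl⟩⟩

variable (hlt : ∀ i ∈ G, i < d i)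
include hlt

theorem eq_max'_forestOrbit {i a : ℕ} (hi : i ∈ G) (ha : a ∈ forestOrbit G d i) (haG : a ∉ G) :
    a = (forestOrbit G d i).max' (forestOrbit_nonempty hi) := by
  have hmax := (forestOrbit G d i).max'_mem (forestOrbit_nonempty hi)
  simp only [forestOrbit, mem_filter] at ha hmax
  rcases ha.2.total hmax.2 with h | h
  · exact h.eq_of_notMem haG
  · exact le_antisymm ((forestOrbit G d i).le_max' a (by simpa [forestOrbit] using ha)) (h.le hlt)

theorem forestOrbit_closed {i a : ℕ} (hi : i ∈ G) (ha : a ∈ forestOrbit G d i)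
    (hmax : a ≠ (forestOrbit G d i).max' (forestOrbit_nonempty hi)) :
    a ∈ G ∧ d a ∈ forestOrbit G d i := by
  have haG : a ∈ G := by_contra fun haG => hmax (eq_max'_forestOrbit hlt hi ha haG)
  exact ⟨haG, d_mem_forestOrbit ha haG⟩

theorem max'_forestOrbit_notMem {i : ℕ} (hi : i ∈ G) :
    (forestOrbit G d i).max' (forestOrbit_nonempty hi) ∉ G := fun hG =>
  (hlt _ hG).not_ge ((forestOrbit G d i).le_max' _ (d_mem_forestOrbit (max'_mem _ _) hG))

variable {L : ℕ}
  (hcap : ∀ S ⊆ G ∪ G.image d, ∀ hS : S.Nonempty,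
    (∀ a ∈ S, a ≠ S.max' hS → a ∈ G ∧ d a ∈ S) → (forestGaps d S hS).card ≤ L)
include hcap

/-- Along an orbit, `d b + 1` can only be the last element: `d` skips at least one position
except when it lands outside `G`. So all but the two ends of an orbit are gaps. -/
theorem card_filter_forestOrbit_le (hskip : ∀ i ∈ G, d i = i + 1 → d i ∉ G) {i : ℕ}
    (hi : i ∈ G) : ((forestOrbit G d i).filter (· ∈ G)).card ≤ L + 1 := by
  set S := forestOrbit G d i
  have hS : S.Nonempty := forestOrbit_nonempty hi
  set m := S.max' hS
  have hreach : ∀ a ∈ S, ForestReach G d i a := fun a ha => (mem_forestOrbit.mp ha).2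
  have hmin : S.min' hS = i :=
    le_antisymm (S.min'_le i (by simpa [S, forestOrbit] using ⟨.inl hi, .refl⟩))
      (S.le_min' hS i fun a ha => (hreach a ha).le hlt)
  have hgaps : (S.erase m).erase i ⊆ forestGaps d S hS := by
    intro a ha
    simp only [mem_erase] at ha
    obtain ⟨hai, ham, haS⟩ := ha
    simp only [forestGaps, hmin, mem_sdiff, mem_erase, mem_image]
    refine ⟨⟨hai, haS⟩, ?_⟩
    rintro ⟨b, ⟨hbm, hbS⟩, rfl⟩
    obtain ⟨hbG, hdb⟩ := forestOrbit_closed hlt hi hbS hbm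
    rcases (hreach _ hdb).total (hreach _ haS) with h | h
    · rcases h.cases_head with h | ⟨c, ⟨hdbG, rfl⟩, hc⟩
      · omega
      have hdd : d (d b) = d b + 1 := by
        have := ForestReach.le hlt hc
        have := hlt _ hdbG
        omega
      exact ham (eq_max'_forestOrbit hlt hi haS (hdd ▸ hskip _ hdbG hdd))
    · have := h.le hlt
      omega
  have hcard := card_le_card hgaps
  have := hcap S (fun a ha => (mem_forestOrbit.mp ha).1) hS
    (fun a ha => forestOrbit_closed hlt hi ha)
  have hsub : S.filter (· ∈ G) ⊆ S.erase m := fun a ha => by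
    simp only [mem_filter] at ha
    exact mem_erase.mpr ⟨fun h => max'_forestOrbit_notMem hlt hi (h ▸ ha.2 : m ∈ G), ha.1⟩
  have := card_le_card hsub
  have := pred_card_le_card_erase (s := S.erase m) (a := i)
  have := card_erase_of_mem (S.max'_mem hS)
  omega

/-- Both the leaves and the gaps fill what the image of `d` leaves of the tree, up to its
minimum. -/
theorem card_filter_forestTree_le {ρ : ℕ} (hρ : ρ ∈ G.image d) :
    ((forestTree G d ρ).filter (· ∉ G.image d)).card ≤ L + 1 := by
  set S := forestTree G d ρ
  have hρS : ρ ∈ S := mem_forestTree.mpr ⟨mem_union_right _ hρ, .refl⟩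
  have hS : S.Nonempty := ⟨ρ, hρS⟩
  have hmax : S.max' hS = ρ :=
    le_antisymm (S.max'_le hS ρ fun a ha => (mem_forestTree.mp ha).2.le hlt) (S.le_max' ρ hρS)
  have hclosed : ∀ a ∈ S, a ≠ S.max' hS → a ∈ G ∧ d a ∈ S := by
    intro a ha haρ
    rw [hmax] at haρ
    obtain ⟨-, hreach⟩ := mem_forestTree.mp ha
    rcases hreach.cases_head with rfl | ⟨c, ⟨haG, rfl⟩, hc⟩
    · exact absurd rfl haρ
    · exact ⟨haG, mem_forestTree.mpr ⟨mem_union_right _ (mem_image_of_mem d haG), hc⟩⟩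
  set img := (S.erase (S.max' hS)).image d
  have himg : img ⊆ S := by
    intro a ha
    obtain ⟨b, hb, rfl⟩ := mem_image.mp ha
    exact (hclosed b (mem_of_mem_erase hb) (ne_of_mem_erase hb)).2
  have hgaps : (S.card - 1) - img.card ≤ (forestGaps d S hS).card := by
    have hshift : ((S.erase (S.max' hS)).image (d · + 1)).card ≤ img.card := by
      have : (S.erase (S.max' hS)).image (d · + 1) = img.image (· + 1) := by
        rw [image_image]
        rfl
      rw [this]
      exact card_image_le
    have := le_card_sdiff ((S.erase (S.max' hS)).image (d · + 1)) (S.erase (S.min' hS))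
    rw [card_erase_of_mem (S.min'_mem hS)] at this
    rw [forestGaps]
    omega
  have hleaves : S.filter (· ∉ G.image d) ⊆ S \ img := fun a ha => by
    simp only [mem_filter] at ha
    refine mem_sdiff.mpr ⟨ha.1, fun h => ha.2 ?_⟩
    obtain ⟨b, hb, rfl⟩ := mem_image.mp h
    exact mem_image_of_mem d (hclosed b (mem_of_mem_erase hb) (ne_of_mem_erase hb)).1
  have := card_le_card hleaves
  rw [card_sdiff_of_subset himg] at this
  have := hcap S (fun a ha => (mem_forestTree.mp ha).1) hS hclosed
  have := card_le_card himg
  omega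

/-- Every element lies on the orbit of a leaf, and every leaf in the tree of a root. -/
theorem card_le_card_roots_mul (hskip : ∀ i ∈ G, d i = i + 1 → d i ∉ G) :
    G.card ≤ (G.image d \ G).card * (L + 1) ^ 2 := by
  set leaves := G.filter (· ∉ G.image d)
  have hleaves : G ⊆ leaves.biUnion fun l => (forestOrbit G d l).filter (· ∈ G) := by
    intro i hi
    induction i using Nat.strong_induction_on with
    | _ i ih =>
      rw [mem_biUnion]
      by_cases hil : i ∈ G.image d
      · obtain ⟨b, hb, rfl⟩ := mem_image.mp hil
        obtain ⟨l, hl, hlb⟩ := mem_biUnion.mp (ih b (hlt b hb) hb)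
        rw [mem_filter, mem_forestOrbit] at hlb
        exact ⟨l, hl, mem_filter.mpr
          ⟨mem_forestOrbit.mpr ⟨mem_union_left _ hi, hlb.1.2.tail ⟨hb, rfl⟩⟩, hi⟩⟩
      · exact ⟨i, mem_filter.mpr ⟨hi, hil⟩,
          mem_filter.mpr ⟨mem_forestOrbit.mpr ⟨mem_union_left _ hi, .refl⟩, hi⟩⟩
  have hroots : leaves ⊆ (G.image d \ G).biUnion fun ρ =>
      (forestTree G d ρ).filter (· ∉ G.image d) := by
    intro l hl
    obtain ⟨hlG, hlimg⟩ := mem_filter.mp hl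
    have hmax := (forestOrbit G d l).max'_mem (forestOrbit_nonempty hlG)
    have hmaxG := max'_forestOrbit_notMem hlt hlG
    obtain ⟨hmaxU, hreach⟩ := mem_forestOrbit.mp hmax
    simp only [mem_biUnion, mem_sdiff, mem_filter, mem_forestTree]
    refine ⟨_, ⟨?_, hmaxG⟩, ⟨mem_union_left _ hlG, hreach⟩, hlimg⟩
    rcases mem_union.mp hmaxU with h | h
    exacts [absurd h hmaxG, h]
  have h1 := (card_le_card hleaves).trans card_biUnion_le
  have h2 := (card_le_card hroots).trans card_biUnion_le
  have h1' := h1.trans (sum_le_sum fun l hl =>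
    card_filter_forestOrbit_le hlt hcap hskip (mem_filter.mp hl).1)
  have h2' := h2.trans (sum_le_sum fun ρ hρ =>
    card_filter_forestTree_le hlt hcap (mem_sdiff.mp hρ).1)
  rw [sum_const, smul_eq_mul] at h1' h2'
  calc G.card ≤ leaves.card * (L + 1) := h1'
    _ ≤ (G.image d \ G).card * (L + 1) * (L + 1) := Nat.mul_le_mul_right _ h2'
    _ = (G.image d \ G).card * (L + 1) ^ 2 := by ring

end Forest

section Path

variable {V : Type*} {T : V → V → Prop} {r : V} {p : ℕ → V} {K : ℕ}

theorem reflTransGen_of_path (hpath : ∀ j < K, T (p j) (p (j + 1))) {i j : ℕ} (hij : i ≤ j)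
    (hj : j ≤ K) : ReflTransGen T (p i) (p j) := by
  induction j, hij using Nat.le_induction with
  | base => exact .refl
  | succ j _ ih => exact (ih (by omega)).tail (hpath j (by omega))

namespace IsRootedTree

variable (hT : IsRootedTree T r) (hpath : ∀ j < K, T (p j) (p (j + 1)))
include hT hpath

theorem le_of_reflTransGen_path {i j : ℕ} (hi : i ≤ K) (h : ReflTransGen T (p i) (p j)) :
    i ≤ j := by
  by_contra! hji
  have hback : TransGen T (p j) (p i) :=
    TransGen.head' (hpath j (by omega)) (reflTransGen_of_path hpath (by omega) hi)
  rcases reflTransGen_iff_eq_or_transGen.mp h with h | h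
  · exact hT.not_transGen_self _ (h ▸ hback)
  · exact hT.not_transGen_self _ (hback.trans h)

theorem path_injective {i j : ℕ} (hi : i ≤ K) (hj : j ≤ K) (h : p i = p j) : i = j :=
  le_antisymm (hT.le_of_reflTransGen_path hpath hi (h ▸ .refl))
    (hT.le_of_reflTransGen_path hpath hj (h ▸ .refl))

end IsRootedTree

theorem reflTransGen_succ_of_path [Finite V] (hpath : ∀ j < K, T (p j) (p (j + 1)))
    (hthin : ∀ j < K, outDeg T (p j) ≤ 1) {i : ℕ} (hi : i < K) {x : V}
    (hx : ReflTransGen T (p i) x) (hne : x ≠ p i) : ReflTransGen T (p (i + 1)) x := by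
  rcases hx.cases_head with h | ⟨c, hc, hcx⟩
  · exact absurd h.symm hne
  · rwa [eq_of_outDeg_le_one (hthin i hi) hc (hpath i hi)] at hcx

end Path

section PathBound

variable {V : Type*} {A T : V → V → Prop} {r : V} {p : ℕ → V} {K : ℕ}

open Classical in
noncomputable def goodPositions (A T : V → V → Prop) (p : ℕ → V) (K : ℕ) : Finset ℕ :=
  (Icc 1 (K - 1)).filter fun i => ReflTransGen T (p i) (otherInNbr A T (p i))

open Classical in
noncomputable def jumpPos (A T : V → V → Prop) (p : ℕ → V) (K i : ℕ) : ℕ :=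
  Nat.findGreatest (fun j => ReflTransGen T (p j) (otherInNbr A T (p i))) K

theorem mem_goodPositions {i : ℕ} : i ∈ goodPositions A T p K ↔
    (1 ≤ i ∧ i ≤ K - 1) ∧ ReflTransGen T (p i) (otherInNbr A T (p i)) := by
  simp [goodPositions]

open Classical in
theorem jumpPos_le (i : ℕ) : jumpPos A T p K i ≤ K := Nat.findGreatest_le K

open Classical in
theorem reflTransGen_jumpPos {i : ℕ} (hi : i ∈ goodPositions A T p K) :
    ReflTransGen T (p (jumpPos A T p K i)) (otherInNbr A T (p i)) := by
  obtain ⟨⟨-, hiK⟩, hreach⟩ := mem_goodPositions.mp hi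
  exact Nat.findGreatest_spec (P := fun j => ReflTransGen T (p j) (otherInNbr A T (p i)))
    (by omega : i ≤ K) hreach

open Classical in
theorem le_jumpPos {i j : ℕ} (hj : j ≤ K) (h : ReflTransGen T (p j) (otherInNbr A T (p i))) :
    j ≤ jumpPos A T p K i :=
  Nat.le_findGreatest hj h

variable (hB : IsOutBranching A r T) (hpath : ∀ j < K, T (p j) (p (j + 1)))
  (hthin : ∀ j < K, outDeg T (p j) ≤ 1)
include hB hpath

theorem eq_jumpPos {i x : ℕ} (hi : i ∈ goodPositions A T p K) (hx : x ≤ K)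
    (h : otherInNbr A T (p i) = p x) : x = jumpPos A T p K i :=
  le_antisymm (le_jumpPos hx (h ▸ .refl))
    (hB.isRootedTree.le_of_reflTransGen_path hpath (jumpPos_le i) (h ▸ reflTransGen_jumpPos hi))

include hthin in
theorem mem_badVertices_of_path {i : ℕ} (hi : 1 ≤ i) (hiK : i ≤ K)
    (h : ¬ ReflTransGen T (p i) (otherInNbr A T (p i))) : p i ∈ badVertices A T r := by
  have harc : T (p (i - 1)) (p i) := by
    simpa [Nat.sub_add_cancel hi] using hpath (i - 1) (by omega)
  refine ⟨⟨hB.isRootedTree.ne_root harc, ?_⟩, h⟩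
  rw [hB.isRootedTree.parent_eq harc]
  exact hthin (i - 1) (by omega)

include hthin in
open Classical in
theorem mem_goodPositions_or_mem_bad {i : ℕ} (hi1 : 1 ≤ i) (hiK : i ≤ K - 1) :
    i ∈ goodPositions A T p K ∨ i ∈ (Icc 1 K).filter (p · ∈ badVertices A T r) := by
  by_cases h : ReflTransGen T (p i) (otherInNbr A T (p i))
  · exact .inl (mem_goodPositions.mpr ⟨⟨hi1, hiK⟩, h⟩)
  · exact .inr (mem_filter.mpr ⟨mem_Icc.mpr ⟨hi1, by omega⟩,
      mem_badVertices_of_path hB hpath hthin hi1 (by omega) h⟩)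

variable [Finite V] (horient : ∀ u v : V, A u v → ¬ A v u)
  (hindeg : ∀ v : V, 2 ≤ {u : V | A u v}.ncard)
include hthin horient hindeg

/-- In an oriented graph the other in-neighbour of `p i` is neither `p i` nor `p (i + 1)`, so it
lies at least two steps below `p i`, unless the path ends first. -/
theorem lt_jumpPos {i : ℕ} (hi : i ∈ goodPositions A T p K) :
    i < jumpPos A T p K i ∧ (jumpPos A T p K i = i + 1 → jumpPos A T p K i = K) := by
  obtain ⟨⟨hi1, hiK⟩, hreach⟩ := mem_goodPositions.mp hi
  have hA := (otherInNbr_spec (T := T) (hindeg (p i))).1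
  have hne : otherInNbr A T (p i) ≠ p i := fun h => by
    rw [h] at hA
    exact horient _ _ hA hA
  have hne' : otherInNbr A T (p i) ≠ p (i + 1) := fun h => by
    rw [h] at hA
    exact horient _ _ (hB.1 _ _ (hpath i (by omega))) hA
  have h1 := reflTransGen_succ_of_path hpath hthin (by omega) hreach hne
  refine ⟨le_jumpPos (by omega) h1, fun hjump => ?_⟩
  by_contra hK
  have hjK := jumpPos_le (A := A) (T := T) (p := p) (K := K) i
  have h2 := reflTransGen_succ_of_path hpath hthin (i := i + 1) (by omega) h1 hne'
  have := le_jumpPos (K := K) (by omega) h2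
  omega

section Gaps

variable {S : Finset ℕ} (hSK : ∀ a ∈ S, a ≤ K) (hS : S.Nonempty)
  (hclosed : ∀ a ∈ S, a ≠ S.max' hS → a ∈ goodPositions A T p K ∧ jumpPos A T p K a ∈ S)
include hSK hclosed

theorem isOutTree_reroute_path :
    IsOutTree A {v | ReflTransGen T (p (S.min' hS)) v} (p (S.max' hS))
      (reroute T (p '' S) (p (S.min' hS)) (p (S.max' hS)) (otherInNbr A T)) := by
  refine hB.isOutTree_reroute (Set.mem_image_of_mem p (S.min'_mem hS))
    (Set.mem_image_of_mem p (S.max'_mem hS))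
    (by rintro _ ⟨a, ha, rfl⟩; exact reflTransGen_of_path hpath (S.min'_le a ha) (hSK a ha))
    (by rintro _ ⟨a, ha, rfl⟩ -; exact (otherInNbr_spec (hindeg _)).1) ?_
  rintro _ ⟨a, ha, rfl⟩ haM
  obtain ⟨hgood, hjS⟩ := hclosed a ha fun h => haM (h ▸ rfl)
  have hlt := (lt_jumpPos hB hpath hthin horient hindeg hgood).1
  refine ⟨_, ⟨_, hjS, rfl⟩, fun h => ?_, reflTransGen_of_path hpath hlt.le (hSK _ hjS),
    reflTransGen_jumpPos hgood⟩
  have := hB.isRootedTree.path_injective hpath (hSK _ hjS) (hSK a ha) h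
  omega

theorem card_forestGaps_le
    (hcap : ∀ S ρ T', IsOutTree A S ρ T' → treeLeaves S T' ≤ leavesCount T) :
    (forestGaps (jumpPos A T p K) S hS).card ≤ leavesCount T := by
  classical
  have hT := hB.isRootedTree
  set m := S.min' hS
  set M := S.max' hS
  have hsub : ↑((forestGaps (jumpPos A T p K) S hS).image fun a => p (a - 1)) ⊆
      {c | ReflTransGen T (p m) c ∧ (∀ y, T c y → y ∈ p '' S) ∧
        ∀ h ∈ p '' S, h ≠ p M → otherInNbr A T h ≠ c} := by
    intro c hc
    obtain ⟨a, ha, rfl⟩ := mem_image.mp hc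
    simp only [forestGaps, mem_sdiff, mem_erase, mem_image, not_exists, not_and] at ha
    obtain ⟨⟨ham, haS⟩, hnot⟩ := ha
    have hma : m < a := lt_of_le_of_ne (S.min'_le a haS) (Ne.symm ham)
    have haK := hSK a haS
    have harc : T (p (a - 1)) (p a) := by
      simpa [Nat.sub_add_cancel (by omega : 1 ≤ a)] using hpath (a - 1) (by omega)
    refine ⟨reflTransGen_of_path hpath (by omega) (by omega), fun y hy => ?_, ?_⟩
    · rw [eq_of_outDeg_le_one (hthin (a - 1) (by omega)) hy harc]
      exact Set.mem_image_of_mem p haS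
    · rintro _ ⟨b, hb, rfl⟩ hbM h
      have hbM' : b ≠ M := fun h => hbM (h ▸ rfl)
      have := eq_jumpPos hB hpath (hclosed b hb hbM').1 (by omega) h
      exact hnot b ⟨hbM', hb⟩ (by omega)
  have hinj : Set.InjOn (fun a => p (a - 1)) (forestGaps (jumpPos A T p K) S hS) := by
    intro a ha a' ha' h
    simp only [forestGaps, coe_sdiff, Set.mem_sdiff, mem_coe, mem_erase] at ha ha'
    have := hT.path_injective hpath (i := a - 1) (j := a' - 1) (by have := hSK a ha.1.2; omega)
      (by have := hSK a' ha'.1.2; omega) h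
    have := S.min'_le a ha.1.2
    have := S.min'_le a' ha'.1.2
    omega
  calc (forestGaps (jumpPos A T p K) S hS).card
      = ((forestGaps (jumpPos A T p K) S hS).image fun a => p (a - 1)).card :=
        (card_image_of_injOn hinj).symm
    _ ≤ _ := (Set.ncard_coe_finset _).symm.trans_le (Set.ncard_le_ncard hsub (Set.toFinite _))
    _ ≤ _ := le_treeLeaves_reroute
    _ ≤ leavesCount T :=
      hcap _ _ _ (isOutTree_reroute_path hB hpath hthin horient hindeg hSK hS hclosed)

end Gaps

theorem card_goodPositions_le
    (hcap : ∀ S ρ T', IsOutTree A S ρ T' → treeLeaves S T' ≤ leavesCount T) :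
    (goodPositions A T p K).card ≤ ((goodPositions A T p K).image (jumpPos A T p K) \
      goodPositions A T p K).card * (leavesCount T + 1) ^ 2 := by
  have hlt := fun i hi => (lt_jumpPos hB hpath hthin horient hindeg (i := i) hi).1
  have hGK : ∀ i ∈ goodPositions A T p K, 1 ≤ i ∧ i ≤ K - 1 :=
    fun i hi => (mem_goodPositions.mp hi).1
  refine card_le_card_roots_mul hlt (fun S hSU hS hclosed => ?_) fun i hi h hG => ?_
  · refine card_forestGaps_le hB hpath hthin horient hindeg (fun a ha => ?_) hS hclosed hcap
    rcases mem_union.mp (hSU ha) with h | h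
    · have := hGK a h
      omega
    · obtain ⟨b, -, rfl⟩ := mem_image.mp h
      exact jumpPos_le b
  · have := hlt i hi
    have := (lt_jumpPos hB hpath hthin horient hindeg hi).2 h
    have := hGK _ hG
    omega

open Classical in
theorem le_of_path (hcap : ∀ S ρ T', IsOutTree A S ρ T' → treeLeaves S T' ≤ leavesCount T) :
    K ≤ (((Icc 1 K).filter (p · ∈ badVertices A T r)).card + 1) *
      ((leavesCount T + 1) ^ 2 + 1) := by
  set G := goodPositions A T p K
  set d := jumpPos A T p K
  set B := (Icc 1 K).filter (p · ∈ badVertices A T r)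
  have hlt : ∀ i ∈ G, i < d i := fun i hi => (lt_jumpPos hB hpath hthin horient hindeg hi).1
  have hGK : ∀ i ∈ G, 1 ≤ i ∧ i ≤ K - 1 := fun i hi => (mem_goodPositions.mp hi).1
  have hG := card_goodPositions_le hB hpath hthin horient hindeg hcap
  have hgood_or_bad := fun i => mem_goodPositions_or_mem_bad hB hpath hthin (i := i)
  have hroots : G.image d \ G ⊆ insert K B := by
    intro ρ hρ
    obtain ⟨hρ, hρG⟩ := mem_sdiff.mp hρ
    obtain ⟨i, hi, rfl⟩ := mem_image.mp hρ
    have := hlt i hi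
    have := hGK i hi
    have : d i ≤ K := jumpPos_le i
    rcases eq_or_ne (d i) K with h | h
    · exact mem_insert.mpr (.inl h)
    · exact mem_insert_of_mem ((hgood_or_bad (d i) (by omega) (by omega)).resolve_left hρG)
  have hcover : Icc 1 K ⊆ insert K (G ∪ B) := by
    intro i hi
    obtain ⟨hi1, hiK⟩ := mem_Icc.mp hi
    rcases eq_or_ne i K with rfl | h
    · exact mem_insert_self _ _
    · exact mem_insert_of_mem (mem_union.mpr (hgood_or_bad i hi1 (by omega)))
  have hK : K ≤ G.card + B.card + 1 := by
    have := card_le_card hcover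
    rw [Nat.card_Icc] at this
    have := card_insert_le K (G ∪ B)
    have := card_union_le G B
    omega
  have hroots' := (card_le_card hroots).trans (card_insert_le K B)
  calc K ≤ G.card + B.card + 1 := hK
    _ ≤ (B.card + 1) * (leavesCount T + 1) ^ 2 + B.card + 1 := by
      gcongr
      exact hG.trans (Nat.mul_le_mul_right _ hroots')
    _ = (B.card + 1) * ((leavesCount T + 1) ^ 2 + 1) := by ring

end PathBound

section Counting

variable {V : Type*} [Fintype V] {A T : V → V → Prop} {r : V}

variable (hB : IsOutBranching A r T) (horient : ∀ u v : V, A u v → ¬ A v u)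
  (hindeg : ∀ v : V, 2 ≤ {u : V | A u v}.ncard)
  (hcap : ∀ S ρ T', IsOutTree A S ρ T' → treeLeaves S T' ≤ leavesCount T)
include hB horient hindeg hcap

open Classical in
theorem IsOutBranching.card_chainFiber_le {t : V} (ht : t ∈ chainTops T r) :
    (chainFiber T r t).card ≤
      (((chainFiber T r t).filter (· ∈ badVertices A T r)).card + 1) *
        ((leavesCount T + 1) ^ 2 + 1) + 1 := by
  obtain ⟨K, p, hpath, hfiber⟩ := hB.isRootedTree.exists_path_chainFiber ht
  have hmem : ∀ j ≤ K, p j ∈ chainFiber T r t := fun j hj =>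
    hfiber ▸ mem_image_of_mem p (mem_range.mpr (by omega))
  have hthin : ∀ j < K, outDeg T (p j) ≤ 1 := fun j hj => by
    simpa [chainFiber] using (mem_filter.mp (hmem j hj.le)).2.1
  have hbad : ((Icc 1 K).filter (p · ∈ badVertices A T r)).card ≤
      ((chainFiber T r t).filter (· ∈ badVertices A T r)).card := by
    refine card_le_card_of_injOn p (fun j hj => ?_) fun i hi j hj h => ?_
    · simp only [coe_filter, mem_Icc, Set.mem_ofPred_eq] at hj
      exact mem_filter.mpr ⟨hmem j hj.1.2, hj.2⟩
    · simp only [coe_filter, mem_Icc, Set.mem_ofPred_eq] at hi hj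
      exact hB.isRootedTree.path_injective hpath hi.1.2 hj.1.2 h
  have hK := le_of_path hB hpath hthin horient hindeg hcap
  calc (chainFiber T r t).card ≤ K + 1 := by
        rw [hfiber]
        exact card_image_le.trans (card_range _).le
    _ ≤ _ := by
        have := hK.trans (Nat.mul_le_mul_right ((leavesCount T + 1) ^ 2 + 1)
          (Nat.add_le_add_right hbad 1))
        omega

open Classical in
theorem IsOutBranching.card_le_of_forall_treeLeaves_le :
    Fintype.card V ≤ 4 * (leavesCount T + 1) ^ 3 := by
  have hT := hB.isRootedTree
  set l := leavesCount T
  set c := (l + 1) ^ 2 + 1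
  have hmax : ∀ T', IsOutBranching A r T' → leavesCount T' ≤ l := fun T' hB' =>
    treeLeaves_univ T' ▸ hcap _ _ _ hB'.isOutTree
  have hbad := hB.ncard_badVertices_le hmax hindeg
  have hbad' : (univ.filter fun v => outDeg T v ≤ 1 ∧ v ∈ badVertices A T r).card ≤ l := by
    rw [← Set.ncard_coe_finset]
    refine (Set.ncard_le_ncard (fun v hv => ?_) (Set.toFinite _)).trans hbad
    simp only [coe_filter, mem_univ, true_and, Set.mem_ofPred_eq] at hv
    exact hv.2
  have hsplit := card_filter_add_card_filter_not (s := univ) (outDeg T · ≤ 1)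
  have hnotW : (univ.filter fun v => ¬ outDeg T v ≤ 1).card ≤
      (univ.filter (2 ≤ outDeg T ·)).card :=
    card_le_card fun v hv => by simp only [mem_filter, mem_univ, true_and] at hv ⊢; omega
  have hbranch := hT.card_branching_add_one_le
  have htops := hT.card_chainTops_add_one_le
  have hfibers := sum_le_sum fun t ht => hB.card_chainFiber_le horient hindeg hcap ht
  rw [sum_add_distrib, ← sum_mul, sum_add_distrib, sum_const, smul_eq_mul, mul_one,
    hT.sum_card_filter_chainFiber] at hfibers
  have hW := hT.sum_card_filter_chainFiber fun _ => True
  simp only [filter_true, and_true] at hW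
  rw [hW] at hfibers
  rw [card_univ] at hsplit
  have hmul := Nat.mul_le_mul_right c (Nat.add_le_add_right hbad' (chainTops T r).card)
  have hmul' := Nat.mul_le_mul_right c (by omega : l + (chainTops T r).card + 1 ≤ 3 * l)
  -- Altogether `n ≤ (3ℓ - 1) c + 3ℓ - 2`, which is below `4 (ℓ + 1)³`.
  nlinarith

end Counting

theorem rpow_one_div_three_sub_one_le {n l : ℕ} (h : n ≤ 4 * (l + 1) ^ 3) :
    ((n : ℝ) / 4) ^ ((1 : ℝ) / 3) - 1 ≤ l := by
  have hcube : (n : ℝ) / 4 ≤ ((l : ℝ) + 1) ^ 3 := by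
    rw [div_le_iff₀ (by norm_num)]
    exact_mod_cast (by linarith : n ≤ (l + 1) ^ 3 * 4)
  have := Real.rpow_le_rpow (by positivity) hcube (by norm_num : (0 : ℝ) ≤ 1 / 3)
  rw [one_div, ← Nat.cast_ofNat (R := ℝ) (n := 3),
    Real.pow_rpow_inv_natCast (by positivity) (by norm_num)] at this
  linarith

/-- Every strongly connected oriented graph on `n` vertices with minimum in-degree at least 2
has an out-branching with at least `(n/4)^(1/3) - 1` leaves. -/
theorem stmt_6 {V : Type*} [Fintype V] [Nonempty V] (A : V → V → Prop)
    (horient : ∀ u v : V, A u v → ¬ A v u)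
    (hindeg : ∀ v : V, 2 ≤ {u : V | A u v}.ncard)
    (hsc : ∀ u v : V, Relation.ReflTransGen A u v) :
    ∃ (r : V) (T : V → V → Prop), IsOutBranching A r T ∧
      ((Fintype.card V : ℝ) / 4) ^ ((1 : ℝ) / 3) - 1 ≤ (leavesCount T : ℝ) := by
  obtain ⟨r, T, hB, hcap⟩ := exists_outBranching_forall_treeLeaves_le hsc
  exact ⟨r, T, hB,
    rpow_one_div_three_sub_one_le (hB.card_le_of_forall_treeLeaves_le horient hindeg hcap)⟩
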